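/- arXiv:1201.4530 — 6 statements merged into one kernel-verified Lean document; each statement's English description precedes it below -/
import Mathlib

section
/- Let A₁ ⊆ A₂ ⊆ … ⊆ A_k be K-absorbing sets, set A₀ = ∅, S_j = A_j \ A_{j−1}, and K_j f := K(1_{S_j}·f) for j = 1, …, k. Let 0 ≤ η < 1, β ≥ 0, and let f : E → [0,∞] be measurable such that for every j = 1, …, k: K_j f(x) ≤ η·f(x) for all x ∈ S_j, and K_j f(x) ≤ β·f(x) for all x ∈ A_k. Then for every j = 1, …, k and every x ∈ S_j, Σ_{m=0}^∞ K^m f(x) ≤ (1/(1−η))·(1 + β/(1−η))^{j−1} · f(x). -/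
/-!
Write `Φₙ = ∑_{m<n} Kᵐ f` and `cᵢ = (1 - η)⁻¹ (1 + β / (1 - η))ⁱ`. Superadditivity of the
integral gives `Φₙ₊₁ ≤ f + K Φₙ`, and at a point of `S_j ⊆ A_j` the absorbing property splits
`K Φₙ` into the slice terms `K_i Φₙ`, `i ≤ j`. If `Φₙ ≤ c_{i-1} f` on every slice `S_i`, the
hypotheses bound the slice terms by `c_{i-1} β f` for `i < j` and by `c_{j-1} η f` for `i = j`,
so `Φₙ₊₁ ≤ (1 + β ∑_{i<j-1} cᵢ + η c_{j-1}) f = c_{j-1} f` on `S_j`: the constants are chosen to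
make this a geometric-series identity. Induction on `n` bounds every partial sum.
-/

open MeasureTheory ProbabilityTheory Finset
open scoped ENNReal NNReal

/-- The kernel operator `f ↦ Kf`, `Kf(x) = ∫ f(y) K(x,dy)`. -/
noncomputable def kernelOp {E : Type*} [MeasurableSpace E]
    (K : Kernel E E) (g : E → ℝ≥0∞) : E → ℝ≥0∞ :=
  fun x => ∫⁻ y, g y ∂(K x)

noncomputable def sliceBound (η β : ℝ≥0) (n : ℕ) : ℝ≥0 :=
  1 / (1 - η) * (1 + β / (1 - η)) ^ n

theorem one_add_mul_sum_sliceBound_add_mul {η : ℝ≥0} (β : ℝ≥0) (hη : η < 1) (n : ℕ) :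
    1 + β * ∑ i ∈ range n, sliceBound η β i + η * sliceBound η β n = sliceBound η β n := by
  have ha : 1 - η ≠ 0 := (tsub_pos_of_lt hη).ne'
  have hgeom := geom_sum_mul_add (β / (1 - η)) n
  simp only [sliceBound, ← mul_sum, add_comm _ (1 : ℝ≥0)] at hgeom ⊢
  set a := 1 - η
  have h1 : a + η = 1 := tsub_add_cancel_of_le hη.le
  set r := 1 + β / a
  calc 1 + β * (1 / a * ∑ i ∈ range n, r ^ i) + η * (1 / a * r ^ n)
      = 1 + (∑ i ∈ range n, r ^ i) * (β / a) + η / a * r ^ n := by ring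
    _ = (a + η) / a * r ^ n := by rw [hgeom]; field_simp
    _ = 1 / a * r ^ n := by rw [h1]

theorem sum_lintegral_le_lintegral_sum {α ι : Type*} [MeasurableSpace α] (μ : Measure α)
    (s : Finset ι) (g : ι → α → ℝ≥0∞) :
    ∑ i ∈ s, ∫⁻ a, g i a ∂μ ≤ ∫⁻ a, ∑ i ∈ s, g i a ∂μ := by
  classical
  induction s using Finset.induction_on with
  | empty => simp
  | insert i s hi ih =>
    simp only [sum_insert hi]
    calc _ ≤ ∫⁻ a, g i a ∂μ + ∫⁻ a, ∑ j ∈ s, g j a ∂μ := by gcongr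
      _ ≤ _ := le_lintegral_add _ _

theorem setLIntegral_eq_sum_sdiff {α : Type*} [MeasurableSpace α] (μ : Measure α)
    (g : α → ℝ≥0∞) {A : ℕ → Set α} (hA0 : A 0 = ∅) {n : ℕ}
    (hmeas : ∀ i < n, MeasurableSet (A (i + 1) \ A i)) (hmono : ∀ i < n, A i ⊆ A (i + 1)) :
    ∫⁻ y in A n, g y ∂μ = ∑ i ∈ range n, ∫⁻ y in A (i + 1) \ A i, g y ∂μ := by
  induction n with
  | zero => simp [hA0]
  | succ n ih =>
    rw [sum_range_succ, ← ih (fun i hi => hmeas i (by omega)) (fun i hi => hmono i (by omega)),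
      ← lintegral_union (hmeas n n.lt_succ_self) Set.disjoint_sdiff_right,
      Set.union_sdiff_cancel (hmono n n.lt_succ_self)]

theorem subset_of_forall_subset_succ {α : Type*} {A : ℕ → Set α} {a b c : ℕ}
    (h : ∀ n, a ≤ n → n < c → A n ⊆ A (n + 1)) (hab : a ≤ b) (hbc : b ≤ c) : A b ⊆ A c := by
  induction c, hbc using Nat.le_induction with
  | base => rfl
  | succ c hbc ih =>
    exact (ih fun n h1 h2 => h n h1 (by omega)).trans (h c (hab.trans hbc) c.lt_succ_self)

theorem kernelOp_eq_setLIntegral {E : Type*} [MeasurableSpace E] {K : Kernel E E} {s : Set E}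
    {x : E} (hx : K x sᶜ = 0) (g : E → ℝ≥0∞) : kernelOp K g x = ∫⁻ y in s, g y ∂(K x) := by
  rw [Measure.restrict_eq_self_of_ae_mem (mem_ae_iff.2 hx)]
  rfl

theorem sum_range_succ_iterate_kernelOp_le {E : Type*} [MeasurableSpace E] (K : Kernel E E)
    (f : E → ℝ≥0∞) (n : ℕ) (x : E) :
    ∑ m ∈ range (n + 1), (kernelOp K)^[m] f x
      ≤ f x + kernelOp K (fun y => ∑ m ∈ range n, (kernelOp K)^[m] f y) x := by
  rw [sum_range_succ', Function.iterate_zero_apply, add_comm]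
  gcongr
  simp only [Function.iterate_succ_apply']
  exact sum_lintegral_le_lintegral_sum (K x) (range n) _

theorem add_kernelOp_le_sliceBound_mul {E : Type*} [MeasurableSpace E] (K : Kernel E E)
    {k : ℕ} {A : ℕ → Set E} (hA0 : A 0 = ∅)
    (hmeas : ∀ j, 1 ≤ j → j ≤ k → MeasurableSet (A j))
    (hmono : ∀ j, 1 ≤ j → j < k → A j ⊆ A (j + 1))
    (habs : ∀ j, 1 ≤ j → j ≤ k → ∀ x ∈ A j, K x (A j)ᶜ = 0)
    {S : ℕ → Set E} (hS : ∀ j, 1 ≤ j → j ≤ k → S j = A j \ A (j - 1))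
    {η β : ℝ≥0} (hη : η < 1) {f : E → ℝ≥0∞}
    (hloc : ∀ j, 1 ≤ j → j ≤ k → ∀ x ∈ S j,
      kernelOp K ((S j).indicator f) x ≤ (η : ℝ≥0∞) * f x)
    (hglob : ∀ j, 1 ≤ j → j ≤ k → ∀ x ∈ A k,
      kernelOp K ((S j).indicator f) x ≤ (β : ℝ≥0∞) * f x)
    {g : E → ℝ≥0∞} (hg : ∀ i, 1 ≤ i → i ≤ k → ∀ y ∈ S i, g y ≤ sliceBound η β (i - 1) * f y)
    {j : ℕ} (hj1 : 1 ≤ j) (hjk : j ≤ k) {x : E} (hx : x ∈ S j) :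
    f x + kernelOp K g x ≤ sliceBound η β (j - 1) * f x := by
  obtain ⟨l, rfl⟩ : ∃ l, j = l + 1 := ⟨j - 1, by omega⟩
  rw [Nat.add_sub_cancel]
  have hSsucc : ∀ i < k, S (i + 1) = A (i + 1) \ A i := fun i hi => hS (i + 1) (by omega) hi
  have hmeasS : ∀ i < k, MeasurableSet (S (i + 1)) := by
    intro i hi
    rw [hSsucc i hi]
    refine (hmeas (i + 1) (by omega) hi).diff ?_
    rcases i with _ | i
    · simp [hA0]
    · exact hmeas (i + 1) (by omega) (by omega)
  have hxA : x ∈ A (l + 1) := by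
    rw [hS _ hj1 hjk] at hx
    exact hx.1
  have hxAk : x ∈ A k := subset_of_forall_subset_succ hmono hj1 hjk hxA
  have hslice : ∀ i < k, ∫⁻ y in S (i + 1), g y ∂(K x)
      ≤ sliceBound η β i * kernelOp K ((S (i + 1)).indicator f) x := by
    intro i hi
    rw [kernelOp, lintegral_indicator (hmeasS i hi), ← lintegral_const_mul' _ _ ENNReal.coe_ne_top]
    exact setLIntegral_mono' (hmeasS i hi) fun y hy => by simpa using hg (i + 1) (by omega) hi y hy
  have hdecomp : kernelOp K g x = ∑ i ∈ range (l + 1), ∫⁻ y in S (i + 1), g y ∂(K x) := by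
    rw [kernelOp_eq_setLIntegral (habs _ hj1 hjk x hxA), setLIntegral_eq_sum_sdiff _ _ hA0]
    · exact sum_congr rfl fun i hi => by rw [hSsucc i (by simp at hi; omega)]
    · exact fun i hi => hSsucc i (by omega) ▸ hmeasS i (by omega)
    · intro i hi
      rcases i with _ | i
      · simp [hA0]
      · exact hmono (i + 1) (by omega) (by omega)
  calc f x + kernelOp K g x
      ≤ f x + (∑ i ∈ range l, sliceBound η β i * (β * f x) + sliceBound η β l * (η * f x)) := by
        rw [hdecomp, sum_range_succ]
        gcongr with i hi
        · rw [mem_range] at hi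
          exact (hslice i (by omega)).trans
            (mul_le_mul_right (hglob (i + 1) (by omega) (by omega) x hxAk) _)
        · exact (hslice l (by omega)).trans (mul_le_mul_right (hloc _ hj1 hjk x hx) _)
    _ = ((1 + β * ∑ i ∈ range l, sliceBound η β i + η * sliceBound η β l : ℝ≥0) : ℝ≥0∞) * f x := by
        push_cast
        rw [add_mul, add_mul, one_mul, mul_sum, sum_mul, add_assoc]
        congr 2
        · exact sum_congr rfl fun i _ => by ring
        · ring
    _ = sliceBound η β l * f x := by rw [one_add_mul_sum_sliceBound_add_mul β hη]

theorem stmt_6_general {E : Type*} [MeasurableSpace E] (K : Kernel E E)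
    (k : ℕ) (A : ℕ → Set E)
    (hA0 : A 0 = ∅)
    (hmeas : ∀ j, 1 ≤ j → j ≤ k → MeasurableSet (A j))
    (hmono : ∀ j, 1 ≤ j → j < k → A j ⊆ A (j + 1))
    (habs : ∀ j, 1 ≤ j → j ≤ k → ∀ x ∈ A j, K x (A j)ᶜ = 0)
    (S : ℕ → Set E) (hS : ∀ j, 1 ≤ j → j ≤ k → S j = A j \ A (j - 1))
    (η β : ℝ≥0) (hη : η < 1)
    (f : E → ℝ≥0∞)
    (hloc : ∀ j, 1 ≤ j → j ≤ k → ∀ x ∈ S j,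
      kernelOp K ((S j).indicator f) x ≤ (η : ℝ≥0∞) * f x)
    (hglob : ∀ j, 1 ≤ j → j ≤ k → ∀ x ∈ A k,
      kernelOp K ((S j).indicator f) x ≤ (β : ℝ≥0∞) * f x) :
    ∀ j, 1 ≤ j → j ≤ k → ∀ x ∈ S j,
      ∑' m : ℕ, (kernelOp K)^[m] f x
        ≤ ((1 / (1 - η) * (1 + β / (1 - η)) ^ (j - 1) : ℝ≥0) : ℝ≥0∞) * f x := by
  have hpartial : ∀ n, ∀ j, 1 ≤ j → j ≤ k → ∀ x ∈ S j,
      ∑ m ∈ range n, (kernelOp K)^[m] f x ≤ sliceBound η β (j - 1) * f x := by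
    intro n
    induction n with
    | zero => simp
    | succ n ih =>
      intro j hj1 hjk x hx
      exact (sum_range_succ_iterate_kernelOp_le K f n x).trans <|
        add_kernelOp_le_sliceBound_mul K hA0 hmeas hmono habs hS hη hloc hglob ih hj1 hjk hx
  intro j hj1 hjk x hx
  rw [ENNReal.tsum_eq_iSup_nat]
  exact iSup_le fun n => hpartial n j hj1 hjk x hx

/-- Theorem (upper estimate): with increasing `K`-absorbing sets `A₁ ⊆ … ⊆ A_k`,
slices `S_j = A_j \ A_{j−1}` and `K_j f = K(1_{S_j}·f)`, local smallness
`K_j f ≤ η f` on `S_j` and global boundedness `K_j f ≤ β f` on `A_k` imply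
`Σ_m K^m f ≤ (1/(1−η))·(1 + β/(1−η))^{j−1}·f` on `S_j`. -/
theorem stmt_6 {E : Type*} [MeasurableSpace E] (K : Kernel E E)
    (k : ℕ) (A : ℕ → Set E)
    (hA0 : A 0 = ∅)
    (hmeas : ∀ j, 1 ≤ j → j ≤ k → MeasurableSet (A j))
    (hmono : ∀ j, 1 ≤ j → j < k → A j ⊆ A (j + 1))
    (habs : ∀ j, 1 ≤ j → j ≤ k → ∀ x ∈ A j, K x (A j)ᶜ = 0)
    (S : ℕ → Set E) (hS : ∀ j, 1 ≤ j → j ≤ k → S j = A j \ A (j - 1))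
    (η β : ℝ≥0) (hη : η < 1)
    (f : E → ℝ≥0∞) (hf : Measurable f)
    (hloc : ∀ j, 1 ≤ j → j ≤ k → ∀ x ∈ S j,
      kernelOp K ((S j).indicator f) x ≤ (η : ℝ≥0∞) * f x)
    (hglob : ∀ j, 1 ≤ j → j ≤ k → ∀ x ∈ A k,
      kernelOp K ((S j).indicator f) x ≤ (β : ℝ≥0∞) * f x) :
    ∀ j, 1 ≤ j → j ≤ k → ∀ x ∈ S j,
      ∑' m : ℕ, (kernelOp K)^[m] f x
        ≤ ((1 / (1 - η) * (1 + β / (1 - η)) ^ (j - 1) : ℝ≥0) : ℝ≥0∞) * f x :=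
  stmt_6_general K k A hA0 hmeas hmono habs S hS η β hη f hloc hglob
end

section
/- Suppose p satisfies the Chapman–Kolmogorov equations with respect to a σ-finite measure m on X. Let ρ be a locally finite (Radon) atomless measure on ℝ and let μ = ρ ⊗ m be the product measure on E = ℝ × X. Then for every n ≥ 0 and all (s,x), (t,y) ∈ E: p_n^μ(s,x,t,y) = (ρ((s,t))^n / n!) · p(s,x,t,y), and consequently p^μ(s,x,t,y) = e^{ρ((s,t))} · p(s,x,t,y), where ρ((s,t)) is the ρ-measure of the open interval (s,t) (interpreted as 0 if s ≥ t). -/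
open MeasureTheory
open scoped ENNReal NNReal

/-- The iterated perturbation terms: `p₀^μ = p`,
`p_n^μ(s,x,t,y) = ∫ p_{n−1}^μ(s,x,u,z)·p(u,z,t,y) dμ(u,z)`. -/
noncomputable def pITer {X : Type*} [MeasurableSpace X]
    (p : ℝ × X → ℝ × X → ℝ≥0∞) (μ : Measure (ℝ × X)) : ℕ → ℝ × X → ℝ × X → ℝ≥0∞
  | 0 => p
  | n + 1 => fun a b => ∫⁻ w, pITer p μ n a w * p w b ∂μ

/-!
Integrating against `ρ ⊗ m` and collapsing the space variable by Chapman–Kolmogorov turns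
`p_{n+1}^μ(s,x,t,y)` into `(∫_{(s,t)} F(u)^n / n! dρ(u)) · p(s,x,t,y)` with `F(u) = ρ((s,u))`.
The moment identity `(n+1) ∫_{(s,t)} F^n dρ = F(t)^{n+1}` follows by induction on `n`: Tonelli
rewrites `∫ F^{n+1}` as `(n+1) ∫ F(v)^n ρ((v,t)) dρ(v)`, and since `ρ` has no atoms,
`ρ((v,t)) + F(v) = F(t)`.
-/

open Set
open scoped Nat

namespace MeasureTheory

variable {ρ : Measure ℝ}

variable (ρ) in
lemma measurable_measure_Ioo_right (s : ℝ) : Measurable fun u => ρ (Ioo s u) :=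
  Monotone.measurable fun _ _ h => measure_mono (Ioo_subset_Ioo_right h)

lemma measure_Ioo_add_measure_Ioo [NullSingletonClass ρ] {s u t : ℝ} (hsu : s < u) (hut : u < t) :
    ρ (Ioo s u) + ρ (Ioo u t) = ρ (Ioo s t) := by
  rw [measure_congr Ioo_ae_eq_Ioc, ← measure_union (Ioc_disjoint_Ioi_same.mono_right
    Ioo_subset_Ioi_self) measurableSet_Ioo, Ioc_union_Ioo_eq_Ioo hsu.le hut]

lemma lintegral_Ioo_lintegral_Ioo [SFinite ρ] {g : ℝ → ℝ≥0∞} (hg : Measurable g) (s t : ℝ) :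
    ∫⁻ u in Ioo s t, ∫⁻ v in Ioo s u, g v ∂ρ ∂ρ = ∫⁻ v in Ioo s t, ρ (Ioo v t) * g v ∂ρ := by
  let f : ℝ → ℝ → ℝ≥0∞ := fun u v => (Iio u).indicator g v
  have hf : Measurable (Function.uncurry f) :=
    Measurable.ite (measurableSet_lt measurable_snd measurable_fst) (hg.comp measurable_snd)
      measurable_const
  calc ∫⁻ u in Ioo s t, ∫⁻ v in Ioo s u, g v ∂ρ ∂ρ
      = ∫⁻ u in Ioo s t, ∫⁻ v in Ioo s t, f u v ∂ρ ∂ρ := by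
        refine setLIntegral_congr_fun measurableSet_Ioo fun u hu => ?_
        rw [lintegral_indicator measurableSet_Iio, Measure.restrict_restrict measurableSet_Iio,
          inter_comm, Ioo_inter_Iio, min_eq_right hu.2.le]
    _ = ∫⁻ v in Ioo s t, ∫⁻ u in Ioo s t, f u v ∂ρ ∂ρ :=
        lintegral_lintegral_swap hf.aemeasurable
    _ = ∫⁻ v in Ioo s t, ρ (Ioo v t) * g v ∂ρ := by
        refine setLIntegral_congr_fun measurableSet_Ioo fun v hv => ?_
        have : ∀ u, f u v = (Ioi v).indicator (fun _ => g v) u := fun u => by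
          by_cases h : v < u <;> simp [f, h]
        rw [lintegral_congr this, lintegral_indicator_const measurableSet_Ioi,
          Measure.restrict_apply measurableSet_Ioi, inter_comm, Ioo_inter_Ioi, max_eq_right hv.1.le,
          mul_comm]

lemma lintegral_measure_Ioo_pow [SFinite ρ] [NullSingletonClass ρ] (s : ℝ) (n : ℕ) (t : ℝ) :
    (n + 1) * ∫⁻ u in Ioo s t, ρ (Ioo s u) ^ n ∂ρ = ρ (Ioo s t) ^ (n + 1) := by
  induction n generalizing t with
  | zero => simp
  | succ n ih =>
    have hF := measurable_measure_Ioo_right ρ s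
    set I : ℕ → ℝ≥0∞ := fun k => ∫⁻ u in Ioo s t, ρ (Ioo s u) ^ k ∂ρ
    have hsucc : I (n + 1) = (n + 1) * ∫⁻ v in Ioo s t, ρ (Ioo v t) * ρ (Ioo s v) ^ n ∂ρ := by
      rw [← lintegral_Ioo_lintegral_Ioo (hF.pow_const n), ← lintegral_const_mul' _ _ (by simp)]
      exact setLIntegral_congr_fun measurableSet_Ioo fun u _ => (ih u).symm
    have hsplit :
        ρ (Ioo s t) * I n = ∫⁻ v in Ioo s t, ρ (Ioo v t) * ρ (Ioo s v) ^ n ∂ρ + I (n + 1) := by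
      rw [← lintegral_const_mul _ (hF.pow_const n), ← lintegral_add_right _ (hF.pow_const _)]
      refine setLIntegral_congr_fun measurableSet_Ioo fun v hv => ?_
      rw [← measure_Ioo_add_measure_Ioo hv.1 hv.2]
      ring
    calc ((n + 1 : ℕ) + 1 : ℝ≥0∞) * I (n + 1) = (n + 1) * (ρ (Ioo s t) * I n) := by
          rw [hsplit, mul_add, ← hsucc]; push_cast; ring
      _ = ρ (Ioo s t) ^ (n + 1 + 1) := by
          rw [mul_left_comm, ih, pow_succ' _ (n + 1)]

end MeasureTheory

lemma ENNReal.tsum_pow_div_factorial {r : ℝ≥0∞} (hr : r ≠ ∞) :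
    ∑' n : ℕ, r ^ n / (n ! : ℝ≥0∞) = ENNReal.ofReal (Real.exp r.toReal) := by
  have hsum := NormedSpace.expSeries_div_hasSum_exp (r.toReal)
  rw [← Real.exp_eq_exp_ℝ] at hsum
  rw [← hsum.tsum_eq, ENNReal.ofReal_tsum_of_nonneg (fun n => by positivity) hsum.summable]
  refine tsum_congr fun n => ?_
  rw [ENNReal.ofReal_div_of_pos (by positivity), ENNReal.ofReal_pow ENNReal.toReal_nonneg,
    ENNReal.ofReal_toReal hr, ENNReal.ofReal_natCast]

def ChapmanKolmogorov {X : Type*} [MeasurableSpace X] (p : ℝ × X → ℝ × X → ℝ≥0∞)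
    (m : Measure X) : Prop :=
  ∀ (s u t : ℝ), s < u → u < t → ∀ (x y : X),
    p (s, x) (t, y) = ∫⁻ z, p (s, x) (u, z) * p (u, z) (t, y) ∂m

namespace ChapmanKolmogorov

variable {X : Type*} [MeasurableSpace X] {p : ℝ × X → ℝ × X → ℝ≥0∞}
  {m : Measure X} [SFinite m] {ρ : Measure ℝ}

lemma lintegral_prod_mul_mul (hCK : ChapmanKolmogorov p m)
    (hp : Measurable fun q : (ℝ × X) × (ℝ × X) => p q.1 q.2)
    (hvan : ∀ (s t : ℝ) (x y : X), t ≤ s → p (s, x) (t, y) = 0)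
    {c : ℝ → ℝ≥0∞} (hc : Measurable c) (s t : ℝ) (x y : X) :
    ∫⁻ w, c w.1 * p (s, x) w * p w (t, y) ∂(ρ.prod m)
      = (∫⁻ u in Ioo s t, c u ∂ρ) * p (s, x) (t, y) := by
  have hp₁ : Measurable (p (s, x)) := hp.comp (measurable_const.prodMk measurable_id)
  have hp₂ : Measurable fun w => p w (t, y) := hp.comp (measurable_id.prodMk measurable_const)
  have hslice : ∀ u, ∫⁻ z, c u * p (s, x) (u, z) * p (u, z) (t, y) ∂m
      = (Ioo s t).indicator (fun u => c u * p (s, x) (t, y)) u := by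
    intro u
    by_cases hu : u ∈ Ioo s t
    · simp_rw [indicator_of_mem hu, hCK s u t hu.1 hu.2, mul_assoc]
      exact lintegral_const_mul _ ((hp₁.comp measurable_prodMk_left).mul
        (hp₂.comp measurable_prodMk_left))
    · rw [indicator_of_notMem hu]
      rcases not_and_or.mp hu with hsu | hut
      · simp [hvan s u x _ (not_lt.mp hsu)]
      · simp [hvan u t _ y (not_lt.mp hut)]
  have hmeas : Measurable fun w : ℝ × X => c w.1 * p (s, x) w * p w (t, y) :=
    ((hc.comp measurable_fst).mul hp₁).mul hp₂
  rw [lintegral_prod _ hmeas.aemeasurable, lintegral_congr hslice,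
    lintegral_indicator measurableSet_Ioo, lintegral_mul_const _ hc]

lemma pITer_prod_eq [SFinite ρ] [NullSingletonClass ρ] (hCK : ChapmanKolmogorov p m)
    (hp : Measurable fun q : (ℝ × X) × (ℝ × X) => p q.1 q.2)
    (hvan : ∀ (s t : ℝ) (x y : X), t ≤ s → p (s, x) (t, y) = 0)
    (n : ℕ) (s t : ℝ) (x y : X) :
    pITer p (ρ.prod m) n (s, x) (t, y) = ρ (Ioo s t) ^ n / (n ! : ℝ≥0∞) * p (s, x) (t, y) := by
  induction n generalizing t y with
  | zero => simp [pITer]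
  | succ n ih =>
    have hF := (measurable_measure_Ioo_right ρ s).pow_const n
    calc pITer p (ρ.prod m) (n + 1) (s, x) (t, y)
        = ∫⁻ w, ρ (Ioo s w.1) ^ n / (n ! : ℝ≥0∞) * p (s, x) w * p w (t, y) ∂(ρ.prod m) :=
          lintegral_congr fun w => by rw [ih]
      _ = (∫⁻ u in Ioo s t, ρ (Ioo s u) ^ n ∂ρ) / (n ! : ℝ≥0∞) * p (s, x) (t, y) := by
          simp_rw [hCK.lintegral_prod_mul_mul hp hvan (hF.div_const _), div_eq_mul_inv]
          rw [lintegral_mul_const _ hF]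
      _ = ρ (Ioo s t) ^ (n + 1) / ((n + 1)! : ℝ≥0∞) * p (s, x) (t, y) := by
          rw [← lintegral_measure_Ioo_pow, Nat.factorial_succ, Nat.cast_mul, Nat.cast_succ,
            ENNReal.mul_div_mul_left _ _ (by simp) (by simp)]

end ChapmanKolmogorov

/-- Perturbation by `μ = ρ ⊗ m` with `ρ` a Radon atomless measure: for all `n` and all
`(s,x),(t,y)`, `p_n^μ(s,x,t,y) = ρ((s,t))^n/n! · p(s,x,t,y)`, and consequently
`p^μ(s,x,t,y) = e^{ρ((s,t))} p(s,x,t,y)`. -/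
theorem stmt_13 {X : Type*} [MeasurableSpace X]
    (p : ℝ × X → ℝ × X → ℝ≥0∞)
    (hp : Measurable fun q : (ℝ × X) × (ℝ × X) => p q.1 q.2)
    (hvan : ∀ (s t : ℝ) (x y : X), t ≤ s → p (s, x) (t, y) = 0)
    (m : Measure X) [SigmaFinite m]
    (hCK : ∀ (s u t : ℝ), s < u → u < t → ∀ (x y : X),
      p (s, x) (t, y) = ∫⁻ z, p (s, x) (u, z) * p (u, z) (t, y) ∂m)
    (ρ : Measure ℝ) [IsLocallyFiniteMeasure ρ]
    (hatomless : ∀ u : ℝ, ρ {u} = 0) :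
    ∀ (n : ℕ) (s t : ℝ) (x y : X),
      pITer p (ρ.prod m) n (s, x) (t, y)
        = ρ (Set.Ioo s t) ^ n / (Nat.factorial n : ℝ≥0∞) * p (s, x) (t, y) ∧
      ∑' n : ℕ, pITer p (ρ.prod m) n (s, x) (t, y)
        = ENNReal.ofReal (Real.exp (ρ (Set.Ioo s t)).toReal) * p (s, x) (t, y) := by
  have : NullSingletonClass ρ := ⟨hatomless⟩
  intro n s t x y
  refine ⟨ChapmanKolmogorov.pITer_prod_eq hCK hp hvan n s t x y, ?_⟩
  simp_rw [ChapmanKolmogorov.pITer_prod_eq hCK hp hvan, ENNReal.tsum_mul_right]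
  rw [ENNReal.tsum_pow_div_factorial measure_Ioo_lt_top.ne]
end

section
/- Suppose p satisfies the Chapman–Kolmogorov equations with respect to a σ-finite measure m on X. Let η > 0, u₀ ∈ ℝ, and let μ = η·(ε_{u₀} ⊗ m), where ε_{u₀} is the Dirac measure at u₀, so that μ is concentrated on {u₀} × X. Then for all (s,x), (t,y) ∈ E: p^μ(s,x,t,y) = Σ_{n=0}^∞ p_n^μ(s,x,t,y) equals (1+η)·p(s,x,t,y) if s < u₀ < t, and equals p(s,x,t,y) otherwise. (In fact p₁^μ(s,x,t,y) = η·p(s,x,t,y)·1_{s<u₀<t} and p_n^μ = 0 for all n ≥ 2.) -/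
/-!
The measure `μ` lives on the single time slice `{u₀} × X`, while `p` vanishes whenever the two
time arguments agree. Hence every `p_{n+1}^μ(a, ·)` vanishes on that slice, and so `p_n^μ`
integrates zero against `μ` for `n ≥ 2`. The only surviving correction is `p₁^μ`, which is
`η ∫ p(s,x,u₀,z) p(u₀,z,t,y) dm(z)`: by Chapman–Kolmogorov this is `η p(s,x,t,y)` when
`s < u₀ < t`, and it is zero otherwise because one of the two factors vanishes.
-/

open MeasureTheory
open scoped ENNReal NNReal

section DiracProd

variable {α β : Type*} [MeasurableSpace α] [MeasurableSpace β] (a : α) (ν : Measure β) [SFinite ν]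

theorem ae_fst_eq_dirac_prod [MeasurableSingletonClass α] :
    ∀ᵐ w ∂(Measure.dirac a).prod ν, w.1 = a := by
  rw [Measure.dirac_prod, (measurableEmbedding_prodMk_left a).ae_map_iff]
  exact ae_of_all _ fun _ => rfl

theorem lintegral_dirac_prod {f : α × β → ℝ≥0∞} (hf : Measurable f) :
    ∫⁻ w, f w ∂(Measure.dirac a).prod ν = ∫⁻ z, f (a, z) ∂ν := by
  rw [Measure.dirac_prod, lintegral_map hf measurable_prodMk_left]

end DiracProd

section PITer

variable {X : Type*} [MeasurableSpace X] {p : ℝ × X → ℝ × X → ℝ≥0∞} {μ : Measure (ℝ × X)}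

theorem pITer_zero : pITer p μ 0 = p := rfl

theorem pITer_succ_apply (n : ℕ) (a b : ℝ × X) :
    pITer p μ (n + 1) a b = ∫⁻ w, pITer p μ n a w * p w b ∂μ := rfl

section Slice

variable {u₀ : ℝ}

theorem pITer_succ_apply_slice_eq_zero (hμ : ∀ᵐ w ∂μ, w.1 = u₀)
    (hdiag : ∀ (u : ℝ) (x y : X), p (u, x) (u, y) = 0) (n : ℕ) (a : ℝ × X) (z : X) :
    pITer p μ (n + 1) a (u₀, z) = 0 := by
  rw [pITer_succ_apply, ← lintegral_zero]
  refine lintegral_congr_ae ?_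
  filter_upwards [hμ] with ⟨u, x⟩ (rfl : u = u₀)
  rw [hdiag, mul_zero]

theorem pITer_eq_zero_of_two_le (hμ : ∀ᵐ w ∂μ, w.1 = u₀)
    (hdiag : ∀ (u : ℝ) (x y : X), p (u, x) (u, y) = 0) {n : ℕ} (hn : 2 ≤ n) (a b : ℝ × X) :
    pITer p μ n a b = 0 := by
  obtain ⟨k, rfl⟩ : ∃ k, n = k + 1 + 1 := ⟨n - 2, by omega⟩
  rw [pITer_succ_apply, ← lintegral_zero]
  refine lintegral_congr_ae ?_
  filter_upwards [hμ] with ⟨u, x⟩ (rfl : u = u₀)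
  rw [pITer_succ_apply_slice_eq_zero hμ hdiag, zero_mul]

theorem tsum_pITer_eq_add_pITer_one (hμ : ∀ᵐ w ∂μ, w.1 = u₀)
    (hdiag : ∀ (u : ℝ) (x y : X), p (u, x) (u, y) = 0) (a b : ℝ × X) :
    ∑' n, pITer p μ n a b = p a b + pITer p μ 1 a b := by
  have hsupp : ∀ n ∉ ({0, 1} : Finset ℕ), pITer p μ n a b = 0 := fun n hn => by
    simp only [Finset.mem_insert, Finset.mem_singleton] at hn
    exact pITer_eq_zero_of_two_le hμ hdiag (by omega) a b
  rw [tsum_eq_sum hsupp, Finset.sum_pair zero_ne_one]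
  rfl

end Slice

theorem pITer_one_apply_smul_dirac_prod (hp : Measurable fun q : (ℝ × X) × (ℝ × X) => p q.1 q.2)
    (hvan : ∀ (s t : ℝ) (x y : X), t ≤ s → p (s, x) (t, y) = 0)
    (m : Measure X) [SFinite m]
    (hCK : ∀ (s u t : ℝ), s < u → u < t → ∀ (x y : X),
      p (s, x) (t, y) = ∫⁻ z, p (s, x) (u, z) * p (u, z) (t, y) ∂m)
    (η : ℝ≥0∞) (u₀ s t : ℝ) (x y : X) :
    pITer p (η • (Measure.dirac u₀).prod m) 1 (s, x) (t, y)
      = if s < u₀ ∧ u₀ < t then η * p (s, x) (t, y) else 0 := by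
  have hmeas : Measurable fun w => p (s, x) w * p w (t, y) :=
    (hp.comp measurable_prodMk_left).mul (hp.comp (measurable_id.prodMk measurable_const))
  rw [pITer_succ_apply, pITer_zero, lintegral_smul_measure, lintegral_dirac_prod u₀ m hmeas,
    smul_eq_mul]
  split_ifs with h
  · rw [← hCK s u₀ t h.1 h.2]
  · have hprod : ∀ z, p (s, x) (u₀, z) * p (u₀, z) (t, y) = 0 := fun z => by
      rcases le_or_gt u₀ s with hs | hs
      · rw [hvan s u₀ x z hs, zero_mul]
      · rw [hvan u₀ t z y (not_lt.1 fun ht => h ⟨hs, ht⟩), mul_zero]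
    simp only [hprod, lintegral_zero, mul_zero]

end PITer

theorem stmt_14_general {X : Type*} [MeasurableSpace X]
    (p : ℝ × X → ℝ × X → ℝ≥0∞)
    (hp : Measurable fun q : (ℝ × X) × (ℝ × X) => p q.1 q.2)
    (hvan : ∀ (s t : ℝ) (x y : X), t ≤ s → p (s, x) (t, y) = 0)
    (m : Measure X) [SigmaFinite m]
    (hCK : ∀ (s u t : ℝ), s < u → u < t → ∀ (x y : X),
      p (s, x) (t, y) = ∫⁻ z, p (s, x) (u, z) * p (u, z) (t, y) ∂m)
    (η : ℝ≥0) (u₀ : ℝ)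
    (μ : Measure (ℝ × X)) (hμ : μ = (η : ℝ≥0∞) • (Measure.dirac u₀).prod m) :
    ∀ (s t : ℝ) (x y : X),
      (∑' n : ℕ, pITer p μ n (s, x) (t, y)
        = if s < u₀ ∧ u₀ < t then (1 + (η : ℝ≥0∞)) * p (s, x) (t, y)
          else p (s, x) (t, y)) ∧
      (pITer p μ 1 (s, x) (t, y)
        = if s < u₀ ∧ u₀ < t then (η : ℝ≥0∞) * p (s, x) (t, y) else 0) ∧
      (∀ n : ℕ, 2 ≤ n → pITer p μ n (s, x) (t, y) = 0) := by
  intro s t x y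
  subst hμ
  have hslice : ∀ᵐ w ∂(η : ℝ≥0∞) • (Measure.dirac u₀).prod m, w.1 = u₀ :=
    Measure.ae_smul_measure (ae_fst_eq_dirac_prod u₀ m) _
  have hdiag : ∀ (u : ℝ) (x y : X), p (u, x) (u, y) = 0 := fun u x y => hvan u u x y le_rfl
  have hone := pITer_one_apply_smul_dirac_prod hp hvan m hCK η u₀ s t x y
  refine ⟨?_, hone, fun n hn => pITer_eq_zero_of_two_le hslice hdiag hn _ _⟩
  rw [tsum_pITer_eq_add_pITer_one hslice hdiag, hone]
  split_ifs
  · rw [add_mul, one_mul]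
  · rw [add_zero]

/-- Perturbation by `μ = η·(ε_{u₀} ⊗ m)`: `p^μ = (1+η)p` if `s < u₀ < t` and `p^μ = p`
otherwise; in fact `p₁^μ = η·p·1_{s<u₀<t}` and `p_n^μ = 0` for `n ≥ 2`. -/
theorem stmt_14 {X : Type*} [MeasurableSpace X]
    (p : ℝ × X → ℝ × X → ℝ≥0∞)
    (hp : Measurable fun q : (ℝ × X) × (ℝ × X) => p q.1 q.2)
    (hvan : ∀ (s t : ℝ) (x y : X), t ≤ s → p (s, x) (t, y) = 0)
    (m : Measure X) [SigmaFinite m]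
    (hCK : ∀ (s u t : ℝ), s < u → u < t → ∀ (x y : X),
      p (s, x) (t, y) = ∫⁻ z, p (s, x) (u, z) * p (u, z) (t, y) ∂m)
    (η : ℝ≥0) (hη : 0 < η) (u₀ : ℝ)
    (μ : Measure (ℝ × X)) (hμ : μ = (η : ℝ≥0∞) • (Measure.dirac u₀).prod m) :
    ∀ (s t : ℝ) (x y : X),
      (∑' n : ℕ, pITer p μ n (s, x) (t, y)
        = if s < u₀ ∧ u₀ < t then (1 + (η : ℝ≥0∞)) * p (s, x) (t, y)
          else p (s, x) (t, y)) ∧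
      (pITer p μ 1 (s, x) (t, y)
        = if s < u₀ ∧ u₀ < t then (η : ℝ≥0∞) * p (s, x) (t, y) else 0) ∧
      (∀ n : ℕ, 2 ≤ n → pITer p μ n (s, x) (t, y) = 0) :=
  stmt_14_general p hp hvan m hCK η u₀ μ hμ
end

section
/- Suppose p satisfies the Chapman–Kolmogorov equations with respect to a σ-finite measure m on X. Fix real numbers u₁ < u₂ < … < u_k and (t,y) ∈ E with t > u_k, and set f(s,x) = p(s,x,t,y) and L(s) = #{1 ≤ i ≤ k : u_i ≥ s}. Define the operator K on measurable g : E → [0,∞] by Kg(s,x) = Σ_{i : u_i = s} g(s,x) + Σ_{i : u_i > s} ∫_X p(s,x,u_i,z)·g(u_i,z) dm(z). Then for every n ≥ 1 and all (s,x) ∈ E: K^n f(s,x) = C(L(s)+n−1, n) · p(s,x,t,y), where C(·,·) denotes the binomial coefficient. -/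
open MeasureTheory Finset
open scoped ENNReal NNReal

/-- The operator `Kg(s,x) = Σ_{i : u_i = s} g(s,x)
+ Σ_{i : u_i > s} ∫_X p(s,x,u_i,z) g(u_i,z) dm(z)`. -/
noncomputable def atomOp {X : Type*} [MeasurableSpace X]
    (p : ℝ × X → ℝ × X → ℝ≥0∞) (m : Measure X) {k : ℕ} (u : Fin k → ℝ)
    (g : ℝ × X → ℝ≥0∞) : ℝ × X → ℝ≥0∞ :=
  fun sx => (∑ i : Fin k, if u i = sx.1 then g sx else 0)
    + ∑ i : Fin k, if sx.1 < u i then ∫⁻ z, p sx (u i, z) * g (u i, z) ∂m else 0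

private lemma hockey (n b : ℕ) :
    ∑ j ∈ Finset.range b, (j + n).choose n = (b + n).choose (n + 1) := by
  induction b with
  | zero => simp [Nat.choose_eq_zero_of_lt]
  | succ b ih =>
      rw [Finset.sum_range_succ, ih, show b + 1 + n = (b + n) + 1 from by omega,
        Nat.choose_succ_succ]
      exact Nat.add_comm _ _

private lemma nat_pascal (a b n : ℕ) (ha : a ≤ 1) :
    a * ((a + b + n - 1).choose n) + (b + n).choose (n + 1) = (a + b + n).choose (n + 1) := by
  interval_cases a
  · simp
  · rw [show 1 + b + n - 1 = b + n from by omega, show 1 + b + n = (b + n) + 1 from by omega,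
      Nat.choose_succ_succ, one_mul]

private lemma card_filter_le_idx {k : ℕ} (u : Fin k → ℝ) (hu : StrictMono u) (i : Fin k) :
    (Finset.univ.filter fun j : Fin k => u i ≤ u j).card = k - i := by
  have h1 : (Finset.univ.filter fun j : Fin k => u i ≤ u j) = Finset.Ici i := by
    ext j; simp [hu.le_iff_le]
  rw [h1, Fin.card_Ici]

private lemma sum_over_filter {k : ℕ} (n : ℕ) (u : Fin k → ℝ) (hu : StrictMono u) (s : ℝ) :
    ∑ i ∈ Finset.univ.filter (fun i : Fin k => s < u i),
      ((Finset.univ.filter fun j : Fin k => u i ≤ u j).card + n - 1).choose n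
    = ((Finset.univ.filter (fun i : Fin k => s < u i)).card + n).choose (n + 1) := by
  set F := Finset.univ.filter (fun i : Fin k => s < u i) with hF
  set b := F.card with hb
  have hinj : Set.InjOn (fun i : Fin k => k - (i : ℕ)) F := by
    intro i _ j _ hij
    have hi := i.isLt; have hj := j.isLt
    exact Fin.ext (by simp only at hij; omega)
  have himg : F.image (fun i : Fin k => k - (i : ℕ)) = Finset.Icc 1 b := by
    apply Finset.eq_of_subset_of_card_le
    · intro j hj
      simp only [Finset.mem_image] at hj
      obtain ⟨i, hi, rfl⟩ := hj
      have hik : (i : ℕ) < k := i.isLt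
      have hsi : s < u i := by
        simpa [hF] using hi
      have hsub : (Finset.univ.filter fun j : Fin k => u i ≤ u j) ⊆ F := by
        intro l hl
        simp only [Finset.mem_filter, Finset.mem_univ, true_and, hF] at hl ⊢
        exact hsi.trans_le hl
      have hcard := Finset.card_le_card hsub
      rw [card_filter_le_idx u hu i] at hcard
      simp only [Finset.mem_Icc]
      omega
    · rw [Nat.card_Icc, Finset.card_image_of_injOn hinj]
      omega
  calc ∑ i ∈ F, ((Finset.univ.filter fun j : Fin k => u i ≤ u j).card + n - 1).choose n
      = ∑ i ∈ F, ((k - (i : ℕ)) + n - 1).choose n :=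
        Finset.sum_congr rfl fun i _ => by rw [card_filter_le_idx u hu i]
    _ = ∑ j ∈ Finset.Icc 1 b, (j + n - 1).choose n := by
        rw [← himg, Finset.sum_image hinj]
    _ = ∑ j ∈ Finset.range b, ((1 + j) + n - 1).choose n := by
        rw [← Finset.Ico_add_one_right_eq_Icc, Finset.sum_Ico_eq_sum_range]; rfl
    _ = ∑ j ∈ Finset.range b, (j + n).choose n := by
        apply Finset.sum_congr rfl
        intro j _
        congr 1
        omega
    _ = (b + n).choose (n + 1) := hockey n b

/-- With `u₁ < … < u_k < t`, `f(s,x) = p(s,x,t,y)` and `L(s) = #{i : u_i ≥ s}`, one has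
`K^n f(s,x) = C(L(s)+n−1, n)·p(s,x,t,y)` for all `n ≥ 1`. -/
theorem stmt_15 {X : Type*} [MeasurableSpace X]
    (p : ℝ × X → ℝ × X → ℝ≥0∞)
    (hp : Measurable fun q : (ℝ × X) × (ℝ × X) => p q.1 q.2)
    (hvan : ∀ (s t : ℝ) (x y : X), t ≤ s → p (s, x) (t, y) = 0)
    (m : Measure X) [SigmaFinite m]
    (hCK : ∀ (s u t : ℝ), s < u → u < t → ∀ (x y : X),
      p (s, x) (t, y) = ∫⁻ z, p (s, x) (u, z) * p (u, z) (t, y) ∂m)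
    (k : ℕ) (u : Fin k → ℝ) (hu : StrictMono u)
    (t : ℝ) (y : X) (ht : ∀ i : Fin k, u i < t) :
    ∀ (n : ℕ), 1 ≤ n → ∀ (s : ℝ) (x : X),
      (atomOp p m u)^[n] (fun w => p w (t, y)) (s, x)
        = (Nat.choose ((Finset.univ.filter fun i : Fin k => s ≤ u i).card + n - 1) n : ℝ≥0∞)
            * p (s, x) (t, y) := by
  have key : ∀ (n : ℕ) (s : ℝ) (x : X),
      (atomOp p m u)^[n] (fun w => p w (t, y)) (s, x)
        = (Nat.choose ((Finset.univ.filter fun i : Fin k => s ≤ u i).card + n - 1) n : ℝ≥0∞)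
            * p (s, x) (t, y) := by
    intro n
    induction n with
    | zero => intro s x; simp
    | succ n ih =>
      intro s x
      rw [Function.iterate_succ_apply']
      have hsum1 : (∑ i : Fin k, if u i = ((s, x) : ℝ × X).1 then
            (atomOp p m u)^[n] (fun w => p w (t, y)) (s, x) else 0)
          = ((Finset.univ.filter fun i : Fin k => u i = s).card : ℝ≥0∞)
            * ((Nat.choose ((Finset.univ.filter fun i : Fin k => s ≤ u i).card + n - 1) n : ℝ≥0∞)
              * p (s, x) (t, y)) := by
        rw [← Finset.sum_filter, Finset.sum_const, ih s x, nsmul_eq_mul]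
      have hsum2 : (∑ i : Fin k, if ((s, x) : ℝ × X).1 < u i then
            ∫⁻ z, p (s, x) (u i, z) * (atomOp p m u)^[n] (fun w => p w (t, y)) (u i, z) ∂m else 0)
          = ((((Finset.univ.filter fun i : Fin k => s < u i).card + n).choose (n + 1) : ℕ) : ℝ≥0∞)
            * p (s, x) (t, y) := by
        rw [← Finset.sum_filter]
        have hterm : ∀ i ∈ Finset.univ.filter (fun i : Fin k => s < u i),
            ∫⁻ z, p (s, x) (u i, z) * (atomOp p m u)^[n] (fun w => p w (t, y)) (u i, z) ∂m
            = ((Nat.choose ((Finset.univ.filter fun j : Fin k => u i ≤ u j).card + n - 1) n : ℕ) : ℝ≥0∞)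
              * p (s, x) (t, y) := by
          intro i hi
          have hsi : s < u i := by
            simpa using hi
          calc ∫⁻ z, p (s, x) (u i, z) * (atomOp p m u)^[n] (fun w => p w (t, y)) (u i, z) ∂m
              = ∫⁻ z, ((Nat.choose ((Finset.univ.filter fun j : Fin k => u i ≤ u j).card + n - 1) n : ℕ) : ℝ≥0∞)
                  * (p (s, x) (u i, z) * p (u i, z) (t, y)) ∂m := by
                refine lintegral_congr fun z => ?_
                rw [ih (u i) z, mul_left_comm]
            _ = ((Nat.choose ((Finset.univ.filter fun j : Fin k => u i ≤ u j).card + n - 1) n : ℕ) : ℝ≥0∞)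
                  * ∫⁻ z, p (s, x) (u i, z) * p (u i, z) (t, y) ∂m :=
                lintegral_const_mul' _ _ (ENNReal.natCast_ne_top _)
            _ = _ := by rw [← hCK s (u i) t hsi (ht i) x y]
        rw [Finset.sum_congr rfl hterm, ← Finset.sum_mul, ← Nat.cast_sum,
          sum_over_filter n u hu s]
      show (∑ i : Fin k, if u i = ((s, x) : ℝ × X).1 then
            (atomOp p m u)^[n] (fun w => p w (t, y)) (s, x) else 0)
          + (∑ i : Fin k, if ((s, x) : ℝ × X).1 < u i then
            ∫⁻ z, p (s, x) (u i, z) * (atomOp p m u)^[n] (fun w => p w (t, y)) (u i, z) ∂m else 0)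
          = _
      rw [hsum1, hsum2]
      -- arithmetic
      set a := (Finset.univ.filter fun i : Fin k => u i = s).card with hadef
      set b := (Finset.univ.filter fun i : Fin k => s < u i).card with hbdef
      set Ls := (Finset.univ.filter fun i : Fin k => s ≤ u i).card with hLdef
      have ha1 : a ≤ 1 := by
        rw [hadef]
        refine Finset.card_le_one.mpr fun i hi j hj => hu.injective ?_
        simp only [Finset.mem_filter, Finset.mem_univ, true_and] at hi hj
        rw [hi, hj]
      have hsplit : Ls = a + b := by
        rw [hLdef, hadef, hbdef, ← Finset.card_union_of_disjoint (by
          refine Finset.disjoint_left.mpr fun i hi hi' => ?_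
          simp only [Finset.mem_filter, Finset.mem_univ, true_and] at hi hi'
          exact absurd hi' (by rw [hi]; exact lt_irrefl s))]
        congr 1
        ext i
        simp only [Finset.mem_union, Finset.mem_filter, Finset.mem_univ, true_and]
        constructor
        · intro h
          rcases eq_or_lt_of_le h with h' | h'
          · exact Or.inl h'.symm
          · exact Or.inr h'
        · rintro (h | h)
          · exact h.ge
          · exact h.le
      have hnat : a * (Ls + n - 1).choose n + (b + n).choose (n + 1)
          = (Ls + (n + 1) - 1).choose (n + 1) := by
        rw [hsplit, show a + b + (n + 1) - 1 = a + b + n from by omega]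
        exact nat_pascal a b n ha1
      rw [← hnat]
      push_cast
      ring
  exact fun n _ s x => key n s x
end

section
/- Suppose p satisfies the Chapman–Kolmogorov equations with respect to a σ-finite measure m on X. Fix real numbers u₁ < u₂ < … < u_k and (t,y) ∈ E with t > u_k, set f(s,x) = p(s,x,t,y) and L(s) = #{1 ≤ i ≤ k : u_i ≥ s}, and define K as in the context. Then for every 0 < η < 1 and all (s,x) ∈ E: Σ_{n=0}^∞ η^n · K^n f(s,x) = (1/(1−η))^{L(s)} · p(s,x,t,y). -/
open MeasureTheory
open scoped ENNReal NNReal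

/-- Iterated-partial-sum coefficients. -/
def Acoef : ℕ → ℕ → ℕ
  | 0, _ => 1
  | n+1, l => ∑ j ∈ Finset.range l, Acoef n (j+1)

lemma Acoef_succ (n l : ℕ) : Acoef (n+1) l = ∑ j ∈ Finset.range l, Acoef n (j+1) := rfl

lemma Acoef_succ_right (n : ℕ) : ∀ l, Acoef n (l+1) = ∑ m ∈ Finset.range (n+1), Acoef m l := by
  induction n with
  | zero => intro l; simp [Acoef]
  | succ n ih =>
    intro l
    rw [Acoef_succ, Finset.sum_range_succ, Finset.sum_range_succ (f := fun m => Acoef m l),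
      ← Acoef_succ, ← ih, add_comm]

lemma tsum_Acoef (a : ℝ≥0∞) : ∀ l : ℕ, ∑' n : ℕ, a ^ n * (Acoef n l : ℝ≥0∞) = ((1 - a)⁻¹) ^ l := by
  intro l; induction l with
  | zero =>
    rw [pow_zero, tsum_eq_sum (s := {0}) ?_]
    · simp [Acoef]
    · intro n hn
      match n with
      | 0 => simp at hn
      | n+1 => simp [Acoef]
  | succ l ih =>
    have shift : ∀ (m : ℕ) (c : ℝ≥0∞),
        ∑' n : ℕ, (if m ≤ n then a ^ n * c else 0) = a ^ m * c * (1 - a)⁻¹ := by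
      intro m c
      rw [← (add_right_injective m).tsum_eq
        (f := fun n => if m ≤ n then a ^ n * c else 0) ?_]
      · simp only [le_add_iff_nonneg_right, Nat.zero_le, if_true, pow_add, mul_assoc]
        rw [ENNReal.tsum_mul_left]
        rw [ENNReal.tsum_mul_right, ENNReal.tsum_geometric]; ring
      · intro n hn
        simp only [Function.mem_support, ne_eq, ite_eq_right_iff, Classical.not_imp] at hn
        exact ⟨n - m, by have := hn.1; simp only []; omega⟩
    calc ∑' n : ℕ, a ^ n * (Acoef n (l+1) : ℝ≥0∞)
        = ∑' n : ℕ, ∑ m ∈ Finset.range (n+1), a ^ n * (Acoef m l : ℝ≥0∞) := by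
          refine tsum_congr fun n => ?_
          rw [Acoef_succ_right, Nat.cast_sum, Finset.mul_sum]
      _ = ∑' n : ℕ, ∑' m : ℕ, (if m ≤ n then a ^ n * (Acoef m l : ℝ≥0∞) else 0) := by
          refine tsum_congr fun n => ?_
          rw [tsum_eq_sum (s := Finset.range (n+1)) ?_]
          · refine Finset.sum_congr rfl fun m hm => ?_
            rw [if_pos (by simpa [Nat.lt_succ_iff] using hm)]
          · intro m hm
            rw [if_neg (by simpa [Nat.lt_succ_iff] using hm)]
      _ = ∑' m : ℕ, ∑' n : ℕ, (if m ≤ n then a ^ n * (Acoef m l : ℝ≥0∞) else 0) :=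
          ENNReal.tsum_comm
      _ = ∑' m : ℕ, a ^ m * (Acoef m l : ℝ≥0∞) * (1 - a)⁻¹ := tsum_congr fun m => shift m _
      _ = (∑' m : ℕ, a ^ m * (Acoef m l : ℝ≥0∞)) * (1 - a)⁻¹ := ENNReal.tsum_mul_right
      _ = ((1 - a)⁻¹) ^ (l + 1) := by rw [ih, pow_succ]

lemma card_filter_le_aux {k : ℕ} (u : Fin k → ℝ) (hu : StrictMono u) (i : Fin k) :
    (Finset.univ.filter fun j => u i ≤ u j).card = k - i.val := by
  have h : (Finset.univ.filter fun j => u i ≤ u j) = Finset.Ici i := by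
    ext j; simp [hu.le_iff_le]
  rw [h, Fin.card_Ici]

lemma key_sum_aux {k : ℕ} (u : Fin k → ℝ) (hu : StrictMono u) (g : ℕ → ℝ≥0∞) (s : ℝ) :
    ∑ i ∈ Finset.univ.filter (fun i => s ≤ u i), g (k - i.val)
      = ∑ j ∈ Finset.range (Finset.univ.filter (fun i : Fin k => s ≤ u i)).card, g (j+1) := by
  set T := Finset.univ.filter (fun i : Fin k => s ≤ u i) with hT
  rcases T.eq_empty_or_nonempty with h | h
  · simp [h]
  · set i₀ := T.min' h with hi₀
    have hmem : i₀ ∈ T := T.min'_mem h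
    have hs₀ : s ≤ u i₀ := by
      have := hmem; rw [hT] at this; simpa using this
    have hTeq : T = Finset.Ici i₀ := by
      ext j
      simp only [hT, Finset.mem_filter, Finset.mem_univ, true_and, Finset.mem_Ici]
      constructor
      · intro hj; exact T.min'_le j (by rw [hT]; simpa using hj)
      · intro hj; exact hs₀.trans (hu.monotone hj)
    have hcard : T.card = k - i₀.val := by rw [hTeq, Fin.card_Ici]
    have hkpos : 0 < k := i₀.pos
    rw [hTeq] at hcard ⊢
    rw [hcard]
    refine Finset.sum_nbij' (fun i => k - 1 - i.val)
      (fun j => (⟨k - 1 - j, by omega⟩ : Fin k)) ?_ ?_ ?_ ?_ ?_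
    · intro a ha
      simp only [Finset.mem_Ici] at ha
      have h1 : i₀.val ≤ a.val := ha
      have h2 : a.val < k := a.isLt
      have h3 : i₀.val < k := i₀.isLt
      simp only [Finset.mem_range]; omega
    · intro j hj
      simp only [Finset.mem_range] at hj
      simp only [Finset.mem_Ici]
      have h3 : i₀.val < k := i₀.isLt
      show i₀ ≤ (⟨k - 1 - j, by omega⟩ : Fin k)
      rw [Fin.le_def]; simp only []; omega
    · intro a ha
      simp only [Finset.mem_Ici] at ha
      have h2 : a.val < k := a.isLt
      apply Fin.ext; simp only []; omega
    · intro j hj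
      simp only [Finset.mem_range] at hj
      have h3 : i₀.val < k := i₀.isLt
      simp only []; omega
    · intro a ha
      have h2 : a.val < k := a.isLt
      show g (k - a.val) = g (k - 1 - a.val + 1)
      congr 1; omega

lemma iter_eq_aux {X : Type*} [MeasurableSpace X]
    (p : ℝ × X → ℝ × X → ℝ≥0∞) (m : Measure X)
    (hCK : ∀ (s u t : ℝ), s < u → u < t → ∀ (x y : X),
      p (s, x) (t, y) = ∫⁻ z, p (s, x) (u, z) * p (u, z) (t, y) ∂m)
    {k : ℕ} (u : Fin k → ℝ) (hu : StrictMono u)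
    (t : ℝ) (y : X) (ht : ∀ i : Fin k, u i < t) :
    ∀ (n : ℕ) (s : ℝ) (x : X), (atomOp p m u)^[n] (fun w => p w (t, y)) (s, x)
      = (Acoef n ((Finset.univ.filter fun i : Fin k => s ≤ u i).card) : ℝ≥0∞)
          * p (s, x) (t, y) := by
  intro n
  induction n with
  | zero => intro s x; simp [Acoef]
  | succ n ih =>
    intro s x
    rw [Function.iterate_succ_apply']
    simp only [atomOp, ih, card_filter_le_aux u hu]
    have h2 : (∑ i : Fin k, if s < u i then
          ∫⁻ z, p (s, x) (u i, z) * ((Acoef n (k - i.val) : ℝ≥0∞) * p (u i, z) (t, y)) ∂m else 0)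
        = ∑ i : Fin k, if s < u i then (Acoef n (k - i.val) : ℝ≥0∞) * p (s, x) (t, y) else 0 := by
      refine Finset.sum_congr rfl fun i _ => ?_
      split_ifs with hi
      · calc ∫⁻ z, p (s, x) (u i, z) * ((Acoef n (k - i.val) : ℝ≥0∞) * p (u i, z) (t, y)) ∂m
            = ∫⁻ z, (Acoef n (k - i.val) : ℝ≥0∞) * (p (s, x) (u i, z) * p (u i, z) (t, y)) ∂m := by
              simp_rw [mul_left_comm]
          _ = (Acoef n (k - i.val) : ℝ≥0∞) * ∫⁻ z, p (s, x) (u i, z) * p (u i, z) (t, y) ∂m :=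
              lintegral_const_mul' _ _ (ENNReal.natCast_ne_top _)
          _ = (Acoef n (k - i.val) : ℝ≥0∞) * p (s, x) (t, y) := by
              rw [← hCK s (u i) t hi (ht i) x y]
      · rfl
    have h1 : (∑ i : Fin k, if u i = s then
          (Acoef n ((Finset.univ.filter fun j : Fin k => s ≤ u j).card) : ℝ≥0∞)
            * p (s, x) (t, y) else 0)
        = ∑ i : Fin k, if u i = s then (Acoef n (k - i.val) : ℝ≥0∞) * p (s, x) (t, y) else 0 := by
      refine Finset.sum_congr rfl fun i _ => ?_
      split_ifs with hi
      · have : (Finset.univ.filter fun j : Fin k => s ≤ u j)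
            = Finset.univ.filter fun j : Fin k => u i ≤ u j := by
          ext j; simp [hi]
        rw [this, card_filter_le_aux u hu]
      · rfl
    have hdis : Disjoint (Finset.univ.filter fun i : Fin k => u i = s)
        (Finset.univ.filter fun i : Fin k => s < u i) := by
      rw [Finset.disjoint_left]
      intro i hi₁ hi₂
      simp only [Finset.mem_filter, Finset.mem_univ, true_and] at hi₁ hi₂
      exact absurd hi₂ (by rw [hi₁]; exact lt_irrefl s)
    have hun : (Finset.univ.filter fun i : Fin k => u i = s)
          ∪ (Finset.univ.filter fun i : Fin k => s < u i)
        = Finset.univ.filter fun i : Fin k => s ≤ u i := by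
      ext i
      simp only [Finset.mem_union, Finset.mem_filter, Finset.mem_univ, true_and]
      constructor
      · rintro (h | h)
        · exact le_of_eq h.symm
        · exact le_of_lt h
      · intro h
        rcases eq_or_lt_of_le h with h | h
        · exact Or.inl h.symm
        · exact Or.inr h
    rw [h1, h2, ← Finset.sum_filter, ← Finset.sum_filter, ← Finset.sum_union hdis, hun,
      ← Finset.sum_mul, key_sum_aux u hu (fun d => (Acoef n d : ℝ≥0∞)) s, Acoef_succ,
      Nat.cast_sum, Finset.sum_mul]

/-- With `u₁ < … < u_k < t`, `f(s,x) = p(s,x,t,y)` and `L(s) = #{i : u_i ≥ s}`: for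
`0 < η < 1`, `Σ_n η^n K^n f(s,x) = (1/(1−η))^{L(s)}·p(s,x,t,y)`. -/
theorem stmt_16 {X : Type*} [MeasurableSpace X]
    (p : ℝ × X → ℝ × X → ℝ≥0∞)
    (hp : Measurable fun q : (ℝ × X) × (ℝ × X) => p q.1 q.2)
    (hvan : ∀ (s t : ℝ) (x y : X), t ≤ s → p (s, x) (t, y) = 0)
    (m : Measure X) [SigmaFinite m]
    (hCK : ∀ (s u t : ℝ), s < u → u < t → ∀ (x y : X),
      p (s, x) (t, y) = ∫⁻ z, p (s, x) (u, z) * p (u, z) (t, y) ∂m)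
    (k : ℕ) (u : Fin k → ℝ) (hu : StrictMono u)
    (t : ℝ) (y : X) (ht : ∀ i : Fin k, u i < t)
    (η : ℝ≥0) (hη0 : 0 < η) (hη1 : η < 1) :
    ∀ (s : ℝ) (x : X),
      ∑' n : ℕ, (η : ℝ≥0∞) ^ n * (atomOp p m u)^[n] (fun w => p w (t, y)) (s, x)
        = ((1 / (1 - η) : ℝ≥0) : ℝ≥0∞) ^ (Finset.univ.filter fun i : Fin k => s ≤ u i).card
            * p (s, x) (t, y) := by
  intro s x
  have hcoe : ((1 / (1 - η) : ℝ≥0) : ℝ≥0∞) = (1 - (η : ℝ≥0∞))⁻¹ := by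
    rw [one_div, ENNReal.coe_inv (tsub_pos_of_lt hη1).ne', ENNReal.coe_sub, ENNReal.coe_one]
  simp only [iter_eq_aux p m hCK u hu t y ht]
  rw [hcoe, ← tsum_Acoef (η : ℝ≥0∞), ← ENNReal.tsum_mul_right]
  exact tsum_congr fun n => (mul_assoc _ _ _).symm
end

section
/- For t > 0 define f_t : ℝ → [0,∞) by f_t(x) = (4π)^{−1/2}·t·x^{−3/2}·e^{−t²/(4x)} for x > 0 and f_t(x) = 0 for x ≤ 0 (the density of the 1/2-stable subordinator). Then for all s > 0 and x > 0: ∫_0^∞ f_t(s)·f_t(x) dt = (4π)^{−1/2}·(s + x)^{−3/2}. -/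
open scoped Real

/-- The density of the 1/2-stable subordinator:
`f_t(x) = (4π)^{−1/2} t x^{−3/2} e^{−t²/(4x)}` for `x > 0`, and `0` otherwise. -/
noncomputable def stableHalfDensity (t x : ℝ) : ℝ :=
  if 0 < x then (4 * Real.pi) ^ (-(1:ℝ)/2) * t * x ^ (-(3:ℝ)/2) * Real.exp (-(t^2) / (4*x))
  else 0

/-!
The product `f_t(s) f_t(x)` is `(4π)⁻¹ (s x)^{-3/2} t² e^{-t²/(4a)}` with `a = s x / (s + x)`,
because the two Gaussian factors combine (`1/s + 1/x = 1/a`). The second Gaussian moment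
`∫_0^∞ t² e^{-t²/(4a)} dt = 2 √π a^{3/2}` then leaves `(4π)⁻¹ · 2√π · (s + x)^{-3/2}`,
and `2√π = (4π)^{1/2}`.
-/

open Real MeasureTheory Set

lemma integral_Ioi_sq_mul_exp_neg_sq_div {a : ℝ} (ha : 0 < a) :
    ∫ t in Ioi (0:ℝ), t ^ 2 * exp (-t ^ 2 / (4 * a)) = 2 * √π * a ^ (3/2 : ℝ) := by
  have hmoment := integral_rpow_mul_exp_neg_mul_rpow (p := 2) (q := 2) (b := (4 * a)⁻¹)
    two_pos (by norm_num) (by positivity)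
  have hΓ : Gamma ((2 + 1) / 2) = √π / 2 := by
    rw [show ((2:ℝ) + 1) / 2 = 1 / 2 + 1 by norm_num, Gamma_add_one (by norm_num),
      Gamma_one_half_eq]
    ring
  have hscale : ((4 * a)⁻¹) ^ (-(2 + 1) / 2 : ℝ) = 8 * a ^ (3/2 : ℝ) := by
    rw [inv_rpow (by positivity), ← rpow_neg (by positivity), mul_rpow (by norm_num) ha.le,
      show (4:ℝ) = 2 ^ (2:ℝ) by norm_num, ← rpow_mul (by norm_num)]
    norm_num
  simp only [rpow_two, hΓ, hscale] at hmoment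
  convert hmoment using 1
  · refine setIntegral_congr_fun measurableSet_Ioi fun t _ => ?_
    congr 2
    ring
  · ring

lemma stableHalfDensity_mul_stableHalfDensity {s x : ℝ} (hs : 0 < s) (hx : 0 < x) (t : ℝ) :
    stableHalfDensity t s * stableHalfDensity t x
      = ((4 * π)⁻¹ * (s * x) ^ (-(3:ℝ)/2))
        * (t ^ 2 * exp (-t ^ 2 / (4 * (s * x / (s + x))))) := by
  have hgauss : exp (-t ^ 2 / (4 * s)) * exp (-t ^ 2 / (4 * x))
      = exp (-t ^ 2 / (4 * (s * x / (s + x)))) := by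
    rw [← exp_add]
    congr 1
    field_simp
    ring
  have hconst : (4 * π) ^ (-(1:ℝ)/2) * (4 * π) ^ (-(1:ℝ)/2) = (4 * π)⁻¹ := by
    rw [← rpow_add (by positivity), ← rpow_neg_one]
    norm_num
  simp only [stableHalfDensity, if_pos hs, if_pos hx]
  rw [mul_rpow hs.le hx.le, ← hconst, ← hgauss]
  ring

lemma two_mul_sqrt_pi_eq : 2 * √π = √(4 * π) := by
  rw [sqrt_mul (by norm_num), show (4:ℝ) = 2 ^ 2 by norm_num, sqrt_sq (by norm_num)]

/-- `∫_0^∞ f_t(s) f_t(x) dt = (4π)^{−1/2} (s+x)^{−3/2}` for `s, x > 0`. -/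
theorem stmt_17 (s x : ℝ) (hs : 0 < s) (hx : 0 < x) :
    ∫ t in Set.Ioi (0:ℝ), stableHalfDensity t s * stableHalfDensity t x
      = (4 * Real.pi) ^ (-(1:ℝ)/2) * (s + x) ^ (-(3:ℝ)/2) := by
  have hsx : 0 < s * x := mul_pos hs hx
  have hsum : 0 < s + x := add_pos hs hx
  simp_rw [stableHalfDensity_mul_stableHalfDensity hs hx]
  rw [integral_const_mul, integral_Ioi_sq_mul_exp_neg_sq_div (by positivity),
    div_rpow hsx.le hsum.le, two_mul_sqrt_pi_eq, neg_div, neg_div, rpow_neg hsx.le,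
    rpow_neg hsum.le, rpow_neg (by positivity), ← sqrt_eq_rpow]
  field_simp
  exact sq_sqrt (by positivity)
end
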